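/- arXiv:gr-qc/0703131 — 4 statements merged into one kernel-verified Lean document; each statement's English description precedes it below -/
import Mathlib

section
/- If x : [0, t₀) → ℝ is a C¹ function with x(0) = 0, x(t) ≥ 0, and x'(t) ≤ (2/t + P) x(t) for all t ∈ (0, t₀), and moreover x(t)/t² → 0 as t → 0⁺, then x ≡ 0 on [0, t₀). -/
open Set Filter Topology

/-! The weight `w t = e^{-Pt}/t²` is an integrating factor: it solves `w' = -(2/t + P) w`, so the
differential inequality makes `I = x w` antitone on `(0, t₀)`. As `I → 0` at `0⁺`, `I ≤ 0`, and
since `w > 0` and `x ≥ 0`, `x` vanishes. -/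

theorem antitoneOn_mul_of_hasDerivAt_le {D : Set ℝ} (hD : Convex ℝ D) (hDo : IsOpen D)
    {x x' w a : ℝ → ℝ} (hx : ∀ t ∈ D, HasDerivAt x (x' t) t)
    (hw : ∀ t ∈ D, HasDerivAt w (-(a t) * w t) t) (hw₀ : ∀ t ∈ D, 0 ≤ w t)
    (hle : ∀ t ∈ D, x' t ≤ a t * x t) : AntitoneOn (fun t => x t * w t) D := by
  have hxw : ∀ t ∈ D, HasDerivAt (fun t => x t * w t) ((x' t - a t * x t) * w t) t :=
    fun t ht => ((hx t ht).mul (hw t ht)).congr_deriv (by ring)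
  refine antitoneOn_of_hasDerivWithinAt_nonpos (f' := fun t => (x' t - a t * x t) * w t) hD
    (fun t ht => (hxw t ht).continuousAt.continuousWithinAt) (fun t ht => ?_) (fun t ht => ?_)
  all_goals rw [hDo.interior_eq] at ht
  · exact (hxw t ht).hasDerivWithinAt
  · exact mul_nonpos_of_nonpos_of_nonneg (sub_nonpos.2 (hle t ht)) (hw₀ t ht)

theorem hasDerivAt_exp_neg_mul_div_pow (P : ℝ) (k : ℕ) {t : ℝ} (ht : t ≠ 0) :
    HasDerivAt (fun s => Real.exp (-P * s) / s ^ k)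
      (-(k / t + P) * (Real.exp (-P * t) / t ^ k)) t := by
  have h := (((hasDerivAt_id t).const_mul (-P)).exp).div (hasDerivAt_pow k t) (pow_ne_zero k ht)
  refine h.congr_deriv ?_
  cases k with
  | zero => simp [mul_comm]
  | succ k => field_simp; simp only [id, pow_succ]; push_cast; ring

theorem AntitoneOn.le_of_tendsto_nhdsGT {β : Type*} [Preorder β] [TopologicalSpace β]
    [ClosedIciTopology β] {f : ℝ → β} {a b t : ℝ} {l : β} (hf : AntitoneOn f (Ioo a b))
    (hlim : Tendsto f (𝓝[>] a) (𝓝 l)) (ht : t ∈ Ioo a b) : f t ≤ l :=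
  ge_of_tendsto hlim <| by
    filter_upwards [Ioo_mem_nhdsGT ht.1] with s hs
    exact hf ⟨hs.1, hs.2.trans ht.2⟩ ht hs.2.le

theorem gronwall_singular_vanishes_general
    (P t₀ : ℝ) (x x' : ℝ → ℝ)
    (hderiv : ∀ t ∈ Set.Ioo 0 t₀, HasDerivAt x (x' t) t)
    (hzero : x 0 = 0)
    (hnonneg : ∀ t ∈ Set.Ico 0 t₀, 0 ≤ x t)
    (hineq : ∀ t ∈ Set.Ioo 0 t₀, x' t ≤ (2 / t + P) * x t)
    (hlim : Tendsto (fun t => x t / t ^ 2) (𝓝[>] 0) (𝓝 0)) :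
    ∀ t ∈ Set.Ico 0 t₀, x t = 0 := by
  intro t ht
  rcases ht.1.eq_or_lt with rfl | ht_pos
  · exact hzero
  set w : ℝ → ℝ := fun s => Real.exp (-P * s) / s ^ 2
  have hanti : AntitoneOn (fun s => x s * w s) (Ioo 0 t₀) :=
    antitoneOn_mul_of_hasDerivAt_le (convex_Ioo 0 t₀) isOpen_Ioo hderiv
      (fun s hs => by exact_mod_cast hasDerivAt_exp_neg_mul_div_pow P 2 hs.1.ne')
      (fun s _ => by positivity) hineq
  have hexp : Tendsto (fun s => Real.exp (-P * s)) (𝓝[>] 0) (𝓝 1) :=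
    ((Real.continuous_exp.comp (continuous_const_mul (-P))).tendsto' 0 1
      (by simp)).mono_left nhdsWithin_le_nhds
  have hI : Tendsto (fun s => x s * w s) (𝓝[>] 0) (𝓝 0) := by
    simpa only [w, mul_one, mul_div_assoc', div_mul_eq_mul_div] using hlim.mul hexp
  have hxw : x t * w t ≤ 0 := hanti.le_of_tendsto_nhdsGT hI ⟨ht_pos, ht.2⟩
  have hw : 0 < w t := by positivity
  exact le_antisymm (nonpos_of_mul_nonpos_left hxw hw) (hnonneg t ht)

/-- If `x : [0,t₀) → ℝ` is continuous, differentiable on `(0,t₀)` with `x 0 = 0`, `x ≥ 0`,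
`x' t ≤ (2/t + P) x t` on `(0,t₀)`, and `x t / t² → 0` as `t → 0⁺`, then `x ≡ 0` on `[0,t₀)`. -/
theorem gronwall_singular_vanishes
    (P t₀ : ℝ) (hP : 0 ≤ P) (ht₀ : 0 < t₀) (x x' : ℝ → ℝ)
    (hcont : ContinuousOn x (Set.Ico 0 t₀))
    (hderiv : ∀ t ∈ Set.Ioo 0 t₀, HasDerivAt x (x' t) t)
    (hzero : x 0 = 0)
    (hnonneg : ∀ t ∈ Set.Ico 0 t₀, 0 ≤ x t)
    (hineq : ∀ t ∈ Set.Ioo 0 t₀, x' t ≤ (2 / t + P) * x t)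
    (hlim : Tendsto (fun t => x t / t ^ 2) (𝓝[>] 0) (𝓝 0)) :
    ∀ t ∈ Set.Ico 0 t₀, x t = 0 :=
  gronwall_singular_vanishes_general P t₀ x x' hderiv hzero hnonneg hineq hlim
end

section
/- Suppose f : (0, t₀) → ℝ is nonnegative and continuous, x(t) = ∫₀ᵗ (2/τ + P) f(τ) dτ is well-defined (the integrand extends continuously to τ = 0), f(t) ≤ x(t) for all t ∈ (0, t₀), and x(t)/t² → 0 as t → 0⁺. Then f ≡ 0 on (0, t₀). -/
open Set Filter Topology MeasureTheory

/-- If `f` is nonnegative and continuous on `(0,t₀)`, `x t = ∫₀ᵗ (2/τ + P) f τ dτ` is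
well-defined, `f t ≤ x t` on `(0,t₀)`, and `x t / t² → 0` as `t → 0⁺`, then `f ≡ 0`. -/
theorem singular_integral_inequality_vanishes
    (P t₀ : ℝ) (hP : 0 ≤ P) (ht₀ : 0 < t₀) (f : ℝ → ℝ)
    (hcont : ContinuousOn f (Set.Ioo 0 t₀))
    (hnonneg : ∀ t ∈ Set.Ioo 0 t₀, 0 ≤ f t)
    (hint : ∀ t ∈ Set.Ioo 0 t₀,
      IntervalIntegrable (fun τ => (2 / τ + P) * f τ) volume 0 t)
    (hle : ∀ t ∈ Set.Ioo 0 t₀, f t ≤ ∫ τ in (0 : ℝ)..t, (2 / τ + P) * f τ)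
    (hlim : Tendsto (fun t => (∫ τ in (0 : ℝ)..t, (2 / τ + P) * f τ) / t ^ 2)
      (𝓝[>] 0) (𝓝 0)) :
    ∀ t ∈ Set.Ioo 0 t₀, f t = 0 := by
  set F : ℝ → ℝ := fun τ => (2 / τ + P) * f τ with hF
  set x : ℝ → ℝ := fun t => ∫ τ in (0 : ℝ)..t, F τ with hx
  set g : ℝ → ℝ := fun t => x t * Real.exp (-P * t) / t ^ 2 with hg
  have hopen : IsOpen (Set.Ioo (0 : ℝ) t₀) := isOpen_Ioo
  have hFcont : ∀ t ∈ Set.Ioo (0 : ℝ) t₀, ContinuousAt F t := by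
    intro t ht
    have hfc : ContinuousAt f t := hcont.continuousAt (hopen.mem_nhds ht)
    have hk : ContinuousAt (fun τ : ℝ => 2 / τ + P) t :=
      ((continuousAt_const.div continuousAt_id (ne_of_gt ht.1))).add continuousAt_const
    exact hk.mul hfc
  have hderivx : ∀ t ∈ Set.Ioo (0 : ℝ) t₀, HasDerivAt x (F t) t := fun t ht =>
    intervalIntegral.integral_hasDerivAt_right (hint t ht)
      (ContinuousAt.stronglyMeasurableAtFilter hopen hFcont t ht) (hFcont t ht)
  have hderivg : ∀ t ∈ Set.Ioo (0 : ℝ) t₀, HasDerivAt g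
      (((F t * Real.exp (-P * t) + x t * (Real.exp (-P * t) * (-P))) * t ^ 2 -
        x t * Real.exp (-P * t) * (2 * t)) / (t ^ 2) ^ 2) t := by
    intro t ht
    have h2 : HasDerivAt (fun t : ℝ => Real.exp (-P * t)) (Real.exp (-P * t) * (-P)) t := by
      simpa using ((hasDerivAt_id t).const_mul (-P)).exp
    have h3 : HasDerivAt (fun t : ℝ => t ^ 2) (2 * t) t := by
      simpa using hasDerivAt_pow 2 t
    exact ((hderivx t ht).mul h2).div h3 (pow_ne_zero 2 (ne_of_gt ht.1))
  have hderiv_nonpos : ∀ t ∈ Set.Ioo (0 : ℝ) t₀, deriv g t ≤ 0 := by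
    intro t ht
    rw [(hderivg t ht).deriv]
    have ht0 : (0 : ℝ) < t := ht.1
    have he : (0 : ℝ) < Real.exp (-P * t) := Real.exp_pos _
    have hfx : f t ≤ x t := hle t ht
    have h2pt : (0 : ℝ) ≤ 2 + P * t := by positivity
    have hFt : F t * t = (2 + P * t) * f t := by
      simp only [hF]
      field_simp
    have key : (2 + P * t) * f t ≤ (2 + P * t) * x t :=
      mul_le_mul_of_nonneg_left hfx h2pt
    have hnum_eq : (F t * Real.exp (-P * t) + x t * (Real.exp (-P * t) * (-P))) * t ^ 2 -
        x t * Real.exp (-P * t) * (2 * t) =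
        Real.exp (-P * t) * t * ((2 + P * t) * f t - (2 + P * t) * x t) := by
      linear_combination (Real.exp (-P * t) * t) * hFt
    have hnum : (F t * Real.exp (-P * t) + x t * (Real.exp (-P * t) * (-P))) * t ^ 2 -
        x t * Real.exp (-P * t) * (2 * t) ≤ 0 := by
      rw [hnum_eq]
      exact mul_nonpos_of_nonneg_of_nonpos (by positivity) (by linarith)
    exact div_nonpos_of_nonpos_of_nonneg hnum (by positivity)
  have hg_anti : AntitoneOn g (Set.Ioo 0 t₀) := by
    apply antitoneOn_of_deriv_nonpos (convex_Ioo _ _)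
    · exact fun t ht => ((hderivg t ht).differentiableAt.continuousAt).continuousWithinAt
    · rw [interior_Ioo]
      exact fun t ht => (hderivg t ht).differentiableAt.differentiableWithinAt
    · rw [interior_Ioo]
      exact hderiv_nonpos
  have hexp : Tendsto (fun t : ℝ => Real.exp (-P * t)) (𝓝[>] (0 : ℝ)) (𝓝 1) := by
    have h : Tendsto (fun t : ℝ => Real.exp (-P * t)) (𝓝 0) (𝓝 (Real.exp (-P * 0))) :=
      ((Real.continuous_exp.comp (continuous_const.mul continuous_id)).tendsto 0)
    simpa using h.mono_left nhdsWithin_le_nhds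
  have hg_lim : Tendsto g (𝓝[>] (0 : ℝ)) (𝓝 0) := by
    have h := hlim.mul hexp
    simp only [zero_mul] at h
    refine h.congr fun t => ?_
    simp only [hg, hx, hF]
    ring
  intro t ht
  have ht0 : (0 : ℝ) < t := ht.1
  have hx_nonneg : 0 ≤ x t := by
    apply intervalIntegral.integral_nonneg_of_ae_restrict ht0.le
    have h1 : ∀ᵐ τ ∂(volume.restrict (Set.Icc (0 : ℝ) t)), τ ∈ Set.Icc (0 : ℝ) t :=
      ae_restrict_mem measurableSet_Icc
    have h2 : ∀ᵐ τ ∂(volume.restrict (Set.Icc (0 : ℝ) t)), τ ≠ 0 := by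
      refine ae_restrict_of_ae ?_
      have : volume ({(0 : ℝ)} : Set ℝ) = 0 := measure_singleton 0
      exact ae_iff.mpr (by simpa using this)
    filter_upwards [h1, h2] with τ hτ hτ0
    have hτpos : 0 < τ := lt_of_le_of_ne hτ.1 (Ne.symm hτ0)
    have hτmem : τ ∈ Set.Ioo (0 : ℝ) t₀ := ⟨hτpos, lt_of_le_of_lt hτ.2 ht.2⟩
    exact mul_nonneg (by positivity) (hnonneg τ hτmem)
  have hgt : g t ≤ 0 := by
    apply ge_of_tendsto hg_lim
    filter_upwards [Ioo_mem_nhdsGT_of_mem (Set.left_mem_Ico.mpr ht0)] with s hs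
    exact hg_anti ⟨hs.1, hs.2.trans ht.2⟩ ht hs.2.le
  have hxt : x t ≤ 0 := by
    have he : (0 : ℝ) < Real.exp (-P * t) := Real.exp_pos _
    have ht2 : (0 : ℝ) < t ^ 2 := by positivity
    simp only [hg] at hgt
    rcases div_nonpos_iff.mp hgt with ⟨h1, h2⟩ | ⟨h1, h2⟩
    · nlinarith
    · nlinarith
  have : f t ≤ 0 := (hle t ht).trans hxt
  linarith [hnonneg t ht]
end

section
/- Let T be a symmetric bilinear form on a Lorentzian vector space that is diagonalizable in an orthonormal basis {e₀, e₁, e₂, e₃} (e₀ timelike) with eigenvalues ρ, p₁, p₂, p₃. If there exists λ ∈ (0,1) with λρ ≥ |pᵢ| for i = 1,2,3, and T(K,K) = 0 for some null vector K, then T = 0. -/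
/-- The Minkowski bilinear form on 4-dimensional Minkowski space. -/
def mink4 (x y : Fin 4 → ℝ) : ℝ :=
  ∑ i, (if i = 0 then (-1 : ℝ) else 1) * x i * y i

/-- For a type I energy momentum tensor `T`, diagonal in an orthonormal basis with
eigenvalues `ρ, p₁, p₂, p₃`: if `λ ∈ (0,1)` with `λ ρ ≥ |pᵢ|` and `T(K,K) = 0` for some
null `K`, then `T = 0`. -/
theorem typeI_vanishes_of_null_annihilation
    (ρ p₁ p₂ p₃ lam : ℝ) (hlam0 : 0 < lam) (hlam1 : lam < 1)
    (h1 : |p₁| ≤ lam * ρ) (h2 : |p₂| ≤ lam * ρ) (h3 : |p₃| ≤ lam * ρ)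
    (K : Fin 4 → ℝ) (hK : K ≠ 0) (hnull : mink4 K K = 0)
    (hTKK : ρ * K 0 * K 0 + p₁ * K 1 * K 1 + p₂ * K 2 * K 2 + p₃ * K 3 * K 3 = 0) :
    ρ = 0 ∧ p₁ = 0 ∧ p₂ = 0 ∧ p₃ = 0 := by
  obtain ⟨h1a, h1b⟩ := abs_le.mp h1
  obtain ⟨h2a, h2b⟩ := abs_le.mp h2
  obtain ⟨h3a, h3b⟩ := abs_le.mp h3
  have hnull' : K 0 * K 0 = K 1 * K 1 + K 2 * K 2 + K 3 * K 3 := by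
    simp only [mink4, Fin.sum_univ_four, Fin.reduceEq, if_false, if_true, reduceIte] at hnull
    linarith
  have hK0 : K 0 ≠ 0 := by
    intro h0
    apply hK
    have e1 : K 1 = 0 := by nlinarith [mul_self_nonneg (K 1), mul_self_nonneg (K 2), mul_self_nonneg (K 3)]
    have e2 : K 2 = 0 := by nlinarith [mul_self_nonneg (K 1), mul_self_nonneg (K 2), mul_self_nonneg (K 3)]
    have e3 : K 3 = 0 := by nlinarith [mul_self_nonneg (K 1), mul_self_nonneg (K 2), mul_self_nonneg (K 3)]
    funext i
    fin_cases i <;> simp [h0, e1, e2, e3]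
  have hK0sq : 0 < K 0 * K 0 := mul_self_pos.mpr hK0
  have hρ0 : 0 ≤ ρ := by nlinarith [abs_nonneg p₁]
  have hρ : ρ = 0 := by
    by_contra hne
    have hρpos : 0 < ρ := lt_of_le_of_ne hρ0 (Ne.symm hne)
    have h4 : lam * ρ * (K 0 * K 0) = lam * ρ * (K 1 * K 1 + K 2 * K 2 + K 3 * K 3) := by
      rw [hnull']
    have key : (1 - lam) * (ρ * (K 0 * K 0)) ≤ 0 := by
      nlinarith [mul_nonneg (by linarith : (0:ℝ) ≤ p₁ + lam * ρ) (mul_self_nonneg (K 1)),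
      mul_nonneg (by linarith : (0:ℝ) ≤ p₂ + lam * ρ) (mul_self_nonneg (K 2)),
      mul_nonneg (by linarith : (0:ℝ) ≤ p₃ + lam * ρ) (mul_self_nonneg (K 3)), h4]
    have pos : 0 < (1 - lam) * (ρ * (K 0 * K 0)) :=
      mul_pos (by linarith) (mul_pos hρpos hK0sq)
    linarith
  rw [hρ] at h1a h1b h2a h2b h3a h3b
  simp only [mul_zero, neg_zero] at h1a h1b h2a h2b h3a h3b
  exact ⟨hρ, le_antisymm h1b h1a, le_antisymm h2b h2a, le_antisymm h3b h3a⟩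
end

section
/- If θ : ℝ → ℝ is differentiable on all of ℝ and satisfies θ' ≤ -θ²/2 everywhere, then θ ≡ 0. -/
/-!
If `f(a) < 0`, then `f` is decreasing, hence negative on `[a, ∞)`, and there `1/f(t) - c t` is
nondecreasing; comparing with `y' = -c y²` forces `f` to blow up to `-∞` before
`a - 1/(c f(a))`, which is impossible for a globally defined `f`. So `f ≥ 0`, and applying this
to `t ↦ -f(-t)`, which satisfies the same inequality, gives `f ≤ 0`.
-/

open Set

theorem monotoneOn_inv_sub_mul_of_deriv_le_neg_mul_sq {f : ℝ → ℝ} {s : Set ℝ} {c : ℝ}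
    (hs : Convex ℝ s) (hf : ∀ t ∈ s, DifferentiableAt ℝ f t) (hne : ∀ t ∈ s, f t ≠ 0)
    (hineq : ∀ t ∈ s, deriv f t ≤ -c * f t ^ 2) :
    MonotoneOn (fun t => (f t)⁻¹ - c * t) s := by
  have hderiv : ∀ t ∈ s,
      HasDerivAt (fun t => (f t)⁻¹ - c * t) (-deriv f t / f t ^ 2 - c * 1) t := fun t ht =>
    ((hf t ht).hasDerivAt.inv (hne t ht)).sub ((hasDerivAt_id' t).const_mul c)
  refine monotoneOn_of_hasDerivWithinAt_nonneg hs
    (fun t ht => (hderiv t ht).continuousAt.continuousWithinAt)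
    (fun t ht => (hderiv t (interior_subset ht)).hasDerivWithinAt) fun t ht => ?_
  have ht := interior_subset ht
  have hsq : 0 < f t ^ 2 := pow_two_pos_of_ne_zero (hne t ht)
  rw [mul_one, sub_nonneg, le_div_iff₀ hsq]
  linarith [hineq t ht]

theorem nonneg_of_deriv_le_neg_mul_sq {f : ℝ → ℝ} {c : ℝ} (hc : 0 < c)
    (hf : Differentiable ℝ f) (hineq : ∀ t, deriv f t ≤ -c * f t ^ 2) (a : ℝ) : 0 ≤ f a := by
  by_contra! ha
  have hanti : Antitone f :=
    antitone_of_deriv_nonpos hf fun t => (hineq t).trans (by nlinarith [sq_nonneg (f t)])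
  have hneg : ∀ t ∈ Ici a, f t < 0 := fun t ht => (hanti ht).trans_lt ha
  have hmono := monotoneOn_inv_sub_mul_of_deriv_le_neg_mul_sq (convex_Ici a)
    (fun t _ => hf t) (fun t ht => (hneg t ht).ne) (fun t _ => hineq t)
  -- the solution of `y' = -c y²` through `(a, f a)` tends to `-∞` at `b`
  set b := a - (c * f a)⁻¹ with hb
  have hab : a ≤ b := by
    have : (c * f a)⁻¹ < 0 := inv_lt_zero.mpr (mul_neg_of_pos_of_neg hc ha)
    linarith
  have hcb : c * b = c * a - (f a)⁻¹ := by
    rw [hb, mul_sub, mul_inv, ← mul_assoc, mul_inv_cancel₀ hc.ne', one_mul]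
  have hgrowth : (f a)⁻¹ - c * a ≤ (f b)⁻¹ - c * b := hmono self_mem_Ici hab hab
  have hfb : (f b)⁻¹ < 0 := inv_lt_zero.mpr (hneg b hab)
  linarith

theorem deriv_neg_comp_neg (f : ℝ → ℝ) (t : ℝ) :
    deriv (fun s => -f (-s)) t = deriv f (-t) := by
  rw [deriv.fun_neg, deriv_comp_neg, neg_neg]

theorem eq_zero_of_deriv_le_neg_mul_sq {f : ℝ → ℝ} {c : ℝ} (hc : 0 < c)
    (hf : Differentiable ℝ f) (hineq : ∀ t, deriv f t ≤ -c * f t ^ 2) (t : ℝ) : f t = 0 := by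
  have hreflected : 0 ≤ -f (-(-t)) := by
    refine nonneg_of_deriv_le_neg_mul_sq (f := fun s => -f (-s)) hc (by fun_prop)
      (fun s => ?_) (-t)
    rw [deriv_neg_comp_neg, neg_sq]
    exact hineq (-s)
  rw [neg_neg] at hreflected
  linarith [nonneg_of_deriv_le_neg_mul_sq hc hf hineq t]

/-- A global solution of the Raychaudhuri inequality `θ' ≤ -θ²/2` on all of `ℝ` must
vanish identically. -/
theorem raychaudhuri_global_vanishes (θ : ℝ → ℝ)
    (hθ : Differentiable ℝ θ)
    (hineq : ∀ t, deriv θ t ≤ -(θ t) ^ 2 / 2) :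
    ∀ t, θ t = 0 :=
  eq_zero_of_deriv_le_neg_mul_sq one_half_pos hθ fun t => by linarith [hineq t]
end
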